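/- Let δ ∈ (-1,0), α ∈ (0,∞), let n ≥ 1 be an integer and let x ∈ (0,∞). Then ∑_{k=0}^{n-1} ((-δ)_k / k!) γ(α+k,x)/x^{α+k} + ((-δ)_n/n!) γ(α+n,x)/x^{α+n} ≤ N(α,δ,x) ≤ ∑_{k=0}^{n-1} ((-δ)_k / k!) γ(α+k,x)/x^{α+k} + S_n(α,δ) γ(α+n,x)/x^{α+n}, where S_n(α,δ) := ((-δ)_{n-1}/(n-1)!) · ((α+n)/(δ+1) − (α+δ+1)/n). -/

import Mathlib

open MeasureTheory Real Filter

/-- The Pochhammer symbol `(a)_k = a (a+1) ⋯ (a+k-1)`, with `(a)_0 = 1`. -/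
noncomputable def poch (a : ℝ) : ℕ → ℝ
  | 0 => 1
  | k + 1 => poch a k * (a + k)

/-- The lower incomplete Gamma function `γ(ν,x) = ∫₀ˣ s^(ν-1) e^(-s) ds`. -/
noncomputable def lincGamma (ν x : ℝ) : ℝ := ∫ s in (0:ℝ)..x, s ^ (ν - 1) * Real.exp (-s)

/-- The reparametrized Kummer function `N(α,δ,x) = ∫₀¹ t^(α-1) (1-t)^δ e^(-xt) dt`. -/
noncomputable def NKummer (α δ x : ℝ) : ℝ :=
  ∫ t in (0:ℝ)..1, t ^ (α - 1) * (1 - t) ^ δ * Real.exp (-(x * t))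

/-!
Since `0 < -δ < 1`, the binomial series `(1 - t)^δ = ∑ (-δ)_k / k! · t^k` has positive
coefficients, and integrating `t^k` against `t^(α-1) e^(-xt)` over `[0, 1]` gives
`γ(α+k, x) / x^(α+k)`. Truncating the series gives the lower bound. For the upper bound,
`ν ↦ ν γ(ν, x) / x^ν` is decreasing (integrate `t^ν e^(-xt)` by parts), so the terms from index
`n` on are at most `(α+n) γ(α+n, x) / x^(α+n) · (-δ)_k / (k! (α+k))`, and these coefficients
telescope below `S_n / (α+n)`. Instead of summing the series, the partial sums are compared
with `(1 - t)^δ` by differentiation, with a remainder at most `t^m (1 - t)^δ` whose integral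
tends to `0`.
-/

open Set intervalIntegral Topology

lemma poch_succ (a : ℝ) (k : ℕ) : poch a (k + 1) = poch a k * (a + k) := rfl

lemma poch_succ_eq_mul_poch_add_one (a : ℝ) (k : ℕ) : poch a (k + 1) = a * poch (a + 1) k := by
  induction k with
  | zero => simp [poch]
  | succ k ih => rw [poch_succ, ih, poch_succ]; push_cast; ring

lemma poch_nonneg {a : ℝ} (ha : 0 ≤ a) (k : ℕ) : 0 ≤ poch a k := by
  induction k with
  | zero => simp [poch]
  | succ k ih => rw [poch_succ]; positivity

/-- The Taylor coefficients of `(1 - t) ^ (-a)` at `t = 0`. -/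
noncomputable def negBinomCoeff (a : ℝ) (k : ℕ) : ℝ := poch a k / k.factorial

lemma negBinomCoeff_zero (a : ℝ) : negBinomCoeff a 0 = 1 := by simp [negBinomCoeff, poch]

lemma negBinomCoeff_nonneg {a : ℝ} (ha : 0 ≤ a) (k : ℕ) : 0 ≤ negBinomCoeff a k :=
  div_nonneg (poch_nonneg ha k) (Nat.cast_nonneg _)

lemma negBinomCoeff_succ (a : ℝ) (k : ℕ) :
    negBinomCoeff a (k + 1) = negBinomCoeff a k * (a + k) / (k + 1) := by
  simp only [negBinomCoeff, poch_succ, Nat.factorial_succ, Nat.cast_mul]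
  push_cast
  field_simp

lemma succ_mul_negBinomCoeff_succ (a : ℝ) (k : ℕ) :
    (k + 1) * negBinomCoeff a (k + 1) = a * negBinomCoeff (a + 1) k := by
  simp only [negBinomCoeff, poch_succ_eq_mul_poch_add_one, Nat.factorial_succ]
  push_cast
  field_simp

lemma negBinomCoeff_sub_one_succ (a : ℝ) (k : ℕ) :
    negBinomCoeff (a - 1) (k + 1) = negBinomCoeff a (k + 1) - negBinomCoeff a k := by
  rw [negBinomCoeff_succ a, negBinomCoeff, poch_succ_eq_mul_poch_add_one, sub_add_cancel,
    Nat.factorial_succ, negBinomCoeff]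
  push_cast
  field_simp
  ring

noncomputable def negBinomPartialSum (a : ℝ) (m : ℕ) (t : ℝ) : ℝ :=
  ∑ k ∈ Finset.range m, negBinomCoeff a k * t ^ k

lemma negBinomPartialSum_succ (a : ℝ) (m : ℕ) (t : ℝ) :
    negBinomPartialSum a (m + 1) t = negBinomPartialSum a m t + negBinomCoeff a m * t ^ m :=
  Finset.sum_range_succ _ _

lemma continuous_negBinomPartialSum (a : ℝ) (m : ℕ) : Continuous (negBinomPartialSum a m) :=
  continuous_finsetSum _ fun _ _ => by fun_prop

lemma hasDerivAt_negBinomPartialSum_succ (a : ℝ) (m : ℕ) (t : ℝ) :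
    HasDerivAt (negBinomPartialSum a (m + 1)) (a * negBinomPartialSum (a + 1) m t) t := by
  induction m with
  | zero =>
    have hconst : negBinomPartialSum a 1 = fun _ => 1 :=
      funext fun s => by simp [negBinomPartialSum, negBinomCoeff_zero]
    simpa [hconst, negBinomPartialSum] using hasDerivAt_const t (1 : ℝ)
  | succ m ih =>
    have hsplit : negBinomPartialSum a (m + 2) =
        fun s => negBinomPartialSum a (m + 1) s + negBinomCoeff a (m + 1) * s ^ (m + 1) :=
      funext fun s => negBinomPartialSum_succ a (m + 1) s
    rw [hsplit]
    refine (ih.add ((hasDerivAt_pow (m + 1) t).const_mul (negBinomCoeff a (m + 1)))).congr_deriv ?_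
    rw [negBinomPartialSum_succ, mul_add, ← mul_assoc a, ← succ_mul_negBinomCoeff_succ,
      Nat.add_sub_cancel]
    push_cast
    ring

lemma negBinomPartialSum_succ_sub_mul (a : ℝ) (m : ℕ) (t : ℝ) :
    negBinomPartialSum a (m + 1) t - t * negBinomPartialSum a m t =
      negBinomPartialSum (a - 1) (m + 1) t := by
  induction m with
  | zero => simp [negBinomPartialSum, negBinomCoeff_zero]
  | succ m ih =>
    rw [negBinomPartialSum_succ a (m + 1), negBinomPartialSum_succ (a - 1) (m + 1), ← ih,
      negBinomCoeff_sub_one_succ, negBinomPartialSum_succ a m]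
    ring

lemma hasDerivAt_one_sub_rpow (b : ℝ) {t : ℝ} (ht : t < 1) :
    HasDerivAt (fun s => (1 - s) ^ b) (-(b * (1 - t) ^ (b - 1))) t := by
  refine (((hasDerivAt_id t).const_sub 1).rpow_const (Or.inl (sub_pos.2 ht).ne')).congr_deriv ?_
  simp

lemma monotoneOn_Ico_of_hasDerivAt_nonneg {f f' : ℝ → ℝ} {a b : ℝ}
    (hf : ∀ t ∈ Ico a b, HasDerivAt f (f' t) t) (hf' : ∀ t ∈ Ioo a b, 0 ≤ f' t) :
    MonotoneOn f (Ico a b) :=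
  monotoneOn_of_hasDerivWithinAt_nonneg (convex_Ico a b)
    (fun t ht => (hf t ht).continuousAt.continuousWithinAt)
    (fun t ht => (hf t (interior_subset ht)).hasDerivWithinAt)
    (by simpa using hf')

lemma negBinomPartialSum_le_one_sub_rpow {a : ℝ} (ha : 0 ≤ a) (m : ℕ) {t : ℝ}
    (ht₀ : 0 ≤ t) (ht₁ : t < 1) : negBinomPartialSum a m t ≤ (1 - t) ^ (-a) := by
  -- Both sides are `1` at `t = 0`, and differentiation turns the claim into itself for `a + 1`.
  induction m generalizing a t with
  | zero => simpa [negBinomPartialSum] using rpow_nonneg (by linarith) _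
  | succ m ih =>
    have hmono := monotoneOn_Ico_of_hasDerivAt_nonneg
      (f := fun s => (1 - s) ^ (-a) - negBinomPartialSum a (m + 1) s)
      (fun s hs => (hasDerivAt_one_sub_rpow (-a) hs.2).sub
        (hasDerivAt_negBinomPartialSum_succ a m s))
      (fun s hs => by
        have h := ih (a := a + 1) (by linarith) hs.1.le hs.2
        rw [show -a - 1 = -(a + 1) by ring]
        nlinarith)
      ⟨le_rfl, one_pos⟩ ⟨ht₀, ht₁⟩ ht₀
    simpa [negBinomPartialSum, negBinomCoeff_zero, Finset.sum_range_succ'] using hmono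

lemma one_sub_rpow_le_negBinomPartialSum_succ {a : ℝ} (ha₀ : 0 ≤ a) (ha₁ : a ≤ 1) (m : ℕ)
    {t : ℝ} (ht₀ : 0 ≤ t) (ht₁ : t < 1) : (1 - t) ^ a ≤ negBinomPartialSum (-a) (m + 1) t := by
  have hmono := monotoneOn_Ico_of_hasDerivAt_nonneg
    (f := fun s => negBinomPartialSum (-a) (m + 1) s - (1 - s) ^ a)
    (fun s hs => (hasDerivAt_negBinomPartialSum_succ (-a) m s).sub
      (hasDerivAt_one_sub_rpow a hs.2))
    (fun s hs => by
      have h := negBinomPartialSum_le_one_sub_rpow (a := -a + 1) (by linarith) m hs.1.le hs.2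
      rw [show -(-a + 1) = a - 1 by ring] at h
      nlinarith)
    ⟨le_rfl, one_pos⟩ ⟨ht₀, ht₁⟩ ht₀
  simpa [negBinomPartialSum, negBinomCoeff_zero, Finset.sum_range_succ'] using hmono

/-- The binomial remainder `(1 - t)^(-a) - ∑_{k<m}` shrinks at least by the factor `t` per term. -/
lemma one_sub_rpow_le_negBinomPartialSum_add {a : ℝ} (ha₀ : 0 ≤ a) (ha₁ : a ≤ 1) (m : ℕ)
    {t : ℝ} (ht₀ : 0 ≤ t) (ht₁ : t < 1) :
    (1 - t) ^ (-a) ≤ negBinomPartialSum a m t + t ^ m * (1 - t) ^ (-a) := by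
  induction m with
  | zero => simp [negBinomPartialSum]
  | succ m ih =>
    have hstep := one_sub_rpow_le_negBinomPartialSum_succ (a := 1 - a) (by linarith)
      (by linarith) m ht₀ ht₁
    rw [neg_sub, ← negBinomPartialSum_succ_sub_mul,
      show 1 - a = -a + 1 by ring, rpow_add (by linarith), rpow_one] at hstep
    have := mul_le_mul_of_nonneg_left ih ht₀
    rw [pow_succ]
    nlinarith

noncomputable def lincGammaScaled (ν x : ℝ) : ℝ :=
  ∫ t in (0:ℝ)..1, t ^ (ν - 1) * exp (-(x * t))

lemma lincGamma_div_rpow {x : ℝ} (hx : 0 < x) (ν : ℝ) :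
    lincGamma ν x / x ^ ν = lincGammaScaled ν x := by
  have hsubst : lincGamma ν x = x * ∫ t in (0:ℝ)..1, (x * t) ^ (ν - 1) * exp (-(x * t)) := by
    simpa [lincGamma] using
      (smul_integral_comp_mul_left (fun s => s ^ (ν - 1) * exp (-s)) x (a := 0) (b := 1)).symm
  have hfactor : ∫ t in (0:ℝ)..1, (x * t) ^ (ν - 1) * exp (-(x * t)) =
      x ^ (ν - 1) * lincGammaScaled ν x := by
    rw [lincGammaScaled, ← intervalIntegral.integral_const_mul]
    refine integral_congr fun t ht => ?_
    rw [uIcc_of_le zero_le_one] at ht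
    simp only [mul_rpow hx.le ht.1]
    ring
  rw [hsubst, hfactor, rpow_sub_one hx.ne']
  field_simp

lemma intervalIntegrable_rpow_mul_exp (x : ℝ) {ν : ℝ} (hν : 0 < ν) :
    IntervalIntegrable (fun t => t ^ (ν - 1) * exp (-(x * t))) volume 0 1 :=
  (intervalIntegrable_rpow' (by linarith)).mul_continuousOn (by fun_prop)

lemma lincGammaScaled_le_of_le (x : ℝ) {ν ν' : ℝ} (hν : 0 < ν) (hνν' : ν ≤ ν') :
    lincGammaScaled ν' x ≤ lincGammaScaled ν x :=
  integral_mono_on_of_le_Ioo zero_le_one (intervalIntegrable_rpow_mul_exp x (by linarith))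
    (intervalIntegrable_rpow_mul_exp x hν) fun t ht =>
      mul_le_mul_of_nonneg_right (rpow_le_rpow_of_exponent_ge ht.1 ht.2.le (by linarith))
        (exp_nonneg _)

lemma lincGammaScaled_nonneg (ν x : ℝ) : 0 ≤ lincGammaScaled ν x :=
  integral_nonneg zero_le_one fun _ ht => mul_nonneg (rpow_nonneg ht.1 _) (exp_nonneg _)

/-- Integration by parts of `t ^ ν * exp (-(x * t))` over `[0, 1]`. -/
lemma mul_lincGammaScaled (x : ℝ) {ν : ℝ} (hν : 0 < ν) :
    ν * lincGammaScaled ν x = exp (-x) + x * lincGammaScaled (ν + 1) x := by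
  have hftc := integral_eq_sub_of_hasDerivAt_of_le zero_le_one
    (f := fun t => t ^ ν * exp (-(x * t)))
    (f' := fun t => ν * (t ^ (ν - 1) * exp (-(x * t))) - x * (t ^ (ν + 1 - 1) * exp (-(x * t))))
    (by fun_prop (disch := exact hν.le))
    (fun t ht => by
      refine ((hasDerivAt_rpow_const (p := ν) (Or.inl ht.1.ne')).mul
        ((hasDerivAt_id t).const_mul x).fun_neg.exp).congr_deriv ?_
      simp only [add_sub_cancel_right, id]
      ring)
    (((intervalIntegrable_rpow_mul_exp x hν).const_mul ν).sub
      ((intervalIntegrable_rpow_mul_exp x (by linarith)).const_mul x))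
  rw [integral_sub (((intervalIntegrable_rpow_mul_exp x hν).const_mul ν))
      ((intervalIntegrable_rpow_mul_exp x (by linarith)).const_mul x),
    intervalIntegral.integral_const_mul, intervalIntegral.integral_const_mul] at hftc
  simp only [one_rpow, one_mul, mul_one, zero_rpow hν.ne', zero_mul, sub_zero] at hftc
  rw [lincGammaScaled, lincGammaScaled]
  linarith

lemma succ_mul_lincGammaScaled_succ_le {x : ℝ} (hx : 0 ≤ x) {ν : ℝ} (hν : 0 < ν) :
    (ν + 1) * lincGammaScaled (ν + 1) x ≤ ν * lincGammaScaled ν x := by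
  rw [mul_lincGammaScaled x hν, mul_lincGammaScaled x (by linarith)]
  gcongr
  exact lincGammaScaled_le_of_le x (by linarith) (by linarith)

lemma add_nat_mul_lincGammaScaled_le {x : ℝ} (hx : 0 ≤ x) {ν : ℝ} (hν : 0 < ν) (j : ℕ) :
    (ν + j) * lincGammaScaled (ν + j) x ≤ ν * lincGammaScaled ν x := by
  induction j with
  | zero => simp
  | succ j ih =>
    push_cast
    rw [← add_assoc]
    exact (succ_mul_lincGammaScaled_succ_le hx (by positivity)).trans ih

lemma intervalIntegrable_rpow_mul_one_sub_rpow {a b : ℝ} (ha : -1 < a) (hb : -1 < b) :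
    IntervalIntegrable (fun t => t ^ a * (1 - t) ^ b) volume 0 1 := by
  have hleft : IntervalIntegrable (fun t => t ^ a * (1 - t) ^ b) volume 0 (1 / 2) := by
    refine (intervalIntegrable_rpow' ha).mul_continuousOn ?_
    rw [uIcc_of_le (by norm_num)]
    exact (continuousOn_const.sub continuousOn_id).rpow_const fun t ht =>
      Or.inl (by simp only [Pi.sub_apply, id]; linarith [ht.2])
  have hright : IntervalIntegrable (fun t => t ^ a * (1 - t) ^ b) volume (1 / 2) 1 := by
    have h := (intervalIntegrable_rpow' hb (a := 1 / 2) (b := 0)).comp_sub_left 1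
    norm_num at h
    refine h.continuousOn_mul ?_
    rw [uIcc_of_le (by norm_num)]
    exact continuousOn_id.rpow_const fun t ht => Or.inl (by simp only [id]; linarith [ht.1])
  exact hleft.trans hright

lemma intervalIntegrable_kummer_integrand {α δ : ℝ} (hα : 0 < α) (hδ : -1 < δ) (x : ℝ) :
    IntervalIntegrable (fun t => t ^ (α - 1) * (1 - t) ^ δ * exp (-(x * t))) volume 0 1 :=
  (intervalIntegrable_rpow_mul_one_sub_rpow (by linarith) hδ).mul_continuousOn (by fun_prop)

lemma tendsto_integral_pow_mul {f : ℝ → ℝ} (hf : IntervalIntegrable f volume 0 1) :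
    Tendsto (fun m : ℕ => ∫ t in (0:ℝ)..1, t ^ m * f t) atTop (𝓝 0) := by
  have hlim := tendsto_integral_filter_of_dominated_convergence (fun t => ‖f t‖)
    (F := fun (m : ℕ) t => t ^ m * f t) (f := fun _ => 0) (l := atTop)
    (Eventually.of_forall fun m => ((continuous_pow m).aestronglyMeasurable).mul hf.def'.1)
    (Eventually.of_forall fun m => ae_of_all _ fun t ht => by
      rw [uIoc_of_le zero_le_one] at ht
      rw [norm_mul, norm_pow, norm_of_nonneg ht.1.le]
      exact mul_le_of_le_one_left (norm_nonneg _) (pow_le_one₀ ht.1.le ht.2))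
    hf.norm
    (((countable_singleton (1 : ℝ)).ae_notMem volume).mono fun t ht₁ ht => by
      rw [uIoc_of_le zero_le_one] at ht
      simpa using (tendsto_pow_atTop_nhds_zero_of_lt_one ht.1.le
        (lt_of_le_of_ne ht.2 ht₁)).mul_const (f t))
  simpa using hlim

lemma integral_mul_negBinomPartialSum (x : ℝ) {α : ℝ} (hα : 0 < α) (a : ℝ) (m : ℕ) :
    ∫ t in (0:ℝ)..1, t ^ (α - 1) * exp (-(x * t)) * negBinomPartialSum a m t =
      ∑ k ∈ Finset.range m, negBinomCoeff a k * lincGammaScaled (α + k) x := by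
  simp only [negBinomPartialSum, Finset.mul_sum]
  rw [integral_finsetSum fun k _ =>
    (intervalIntegrable_rpow_mul_exp x hα).mul_continuousOn (by fun_prop)]
  refine Finset.sum_congr rfl fun k _ => ?_
  rw [lincGammaScaled, ← intervalIntegral.integral_const_mul]
  refine integral_congr_ae (ae_of_all _ fun t ht => ?_)
  rw [uIoc_of_le zero_le_one] at ht
  rw [show α + k - 1 = (α - 1) + k by ring, rpow_add ht.1, rpow_natCast]
  ring

lemma sum_le_NKummer (x : ℝ) {α δ : ℝ} (hα : 0 < α) (hδ₁ : -1 < δ) (hδ₀ : δ ≤ 0) (m : ℕ) :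
    ∑ k ∈ Finset.range m, negBinomCoeff (-δ) k * lincGammaScaled (α + k) x ≤ NKummer α δ x := by
  rw [← integral_mul_negBinomPartialSum x hα]
  refine integral_mono_on_of_le_Ioo zero_le_one
    ((intervalIntegrable_rpow_mul_exp x hα).mul_continuousOn
      (continuous_negBinomPartialSum _ m).continuousOn)
    (intervalIntegrable_kummer_integrand hα hδ₁ x) fun t ht => ?_
  have hpartial := negBinomPartialSum_le_one_sub_rpow (neg_nonneg.2 hδ₀) m ht.1.le ht.2
  rw [neg_neg] at hpartial
  have hweight : 0 ≤ t ^ (α - 1) * exp (-(x * t)) :=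
    mul_nonneg (rpow_nonneg ht.1.le _) (exp_nonneg _)
  calc t ^ (α - 1) * exp (-(x * t)) * negBinomPartialSum (-δ) m t
      ≤ t ^ (α - 1) * exp (-(x * t)) * (1 - t) ^ δ := mul_le_mul_of_nonneg_left hpartial hweight
    _ = t ^ (α - 1) * (1 - t) ^ δ * exp (-(x * t)) := by ring

lemma NKummer_le_sum_add (x : ℝ) {α δ : ℝ} (hα : 0 < α) (hδ₁ : -1 < δ) (hδ₀ : δ ≤ 0) (m : ℕ) :
    NKummer α δ x ≤ ∑ k ∈ Finset.range m, negBinomCoeff (-δ) k * lincGammaScaled (α + k) x +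
      ∫ t in (0:ℝ)..1, t ^ m * (t ^ (α - 1) * (1 - t) ^ δ * exp (-(x * t))) := by
  have hsum := (intervalIntegrable_rpow_mul_exp x hα).mul_continuousOn
    (continuous_negBinomPartialSum (-δ) m).continuousOn
  have hrem := (intervalIntegrable_kummer_integrand hα hδ₁ x).continuousOn_mul
    (continuous_pow m).continuousOn
  rw [← integral_mul_negBinomPartialSum x hα, ← integral_add hsum hrem]
  refine integral_mono_on_of_le_Ioo zero_le_one (intervalIntegrable_kummer_integrand hα hδ₁ x)
    (hsum.add hrem) fun t ht => ?_
  have hpartial := one_sub_rpow_le_negBinomPartialSum_add (neg_nonneg.2 hδ₀) (by linarith) m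
    ht.1.le ht.2
  rw [neg_neg] at hpartial
  have hweight : 0 ≤ t ^ (α - 1) * exp (-(x * t)) :=
    mul_nonneg (rpow_nonneg ht.1.le _) (exp_nonneg _)
  calc t ^ (α - 1) * (1 - t) ^ δ * exp (-(x * t))
      = t ^ (α - 1) * exp (-(x * t)) * (1 - t) ^ δ := by ring
    _ ≤ t ^ (α - 1) * exp (-(x * t)) * (negBinomPartialSum (-δ) m t + t ^ m * (1 - t) ^ δ) :=
      mul_le_mul_of_nonneg_left hpartial hweight
    _ = _ := by ring

/-- The paper's `S_n(α, δ)`. -/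
noncomputable def kummerUpperCoeff (α δ : ℝ) (n : ℕ) : ℝ :=
  poch (-δ) (n - 1) / ((n - 1).factorial : ℝ) * ((α + n) / (δ + 1) - (α + δ + 1) / n)

lemma kummerUpperCoeff_succ (α δ : ℝ) (j : ℕ) :
    kummerUpperCoeff α δ (j + 1) =
      negBinomCoeff (-δ) j * ((α + j + 1) / (δ + 1) - (α + δ + 1) / (j + 1)) := by
  simp only [kummerUpperCoeff, Nat.add_sub_cancel, Nat.cast_add, Nat.cast_one, add_assoc]
  rfl

section UpperCoeff

variable {α δ : ℝ} (hα : 0 < α) (hδ₁ : -1 < δ) (hδ₀ : δ ≤ 0)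
include hα hδ₁ hδ₀

lemma kummerUpperCoeff_succ_nonneg (j : ℕ) : 0 ≤ kummerUpperCoeff α δ (j + 1) := by
  rw [kummerUpperCoeff_succ]
  refine mul_nonneg (negBinomCoeff_nonneg (by linarith) j) (sub_nonneg.2 ?_)
  rw [div_le_div_iff₀ (by positivity) (by linarith)]
  nlinarith [(Nat.cast_nonneg j : (0:ℝ) ≤ j)]

/-- `S_{j+1} / (α + j + 1)` bounds the tail `∑_{k > j} (-δ)_k / (k! (α + k))` by telescoping. -/
lemma negBinomCoeff_div_add_le (j : ℕ) :
    negBinomCoeff (-δ) (j + 1) / (α + (j + 1 : ℕ)) +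
        kummerUpperCoeff α δ (j + 2) / (α + (j + 2 : ℕ)) ≤
      kummerUpperCoeff α δ (j + 1) / (α + (j + 1 : ℕ)) := by
  have hj : (0:ℝ) ≤ j := Nat.cast_nonneg j
  have hgap : kummerUpperCoeff α δ (j + 1) / (α + (j + 1 : ℕ)) -
      kummerUpperCoeff α δ (j + 2) / (α + (j + 2 : ℕ)) -
      negBinomCoeff (-δ) (j + 1) / (α + (j + 1 : ℕ)) =
      negBinomCoeff (-δ) j * ((j - δ) * (α + δ + 1)) / ((j + 1) * (j + 2) * (α + j + 2)) := by
    have hδ : δ + 1 ≠ 0 := by linarith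
    rw [kummerUpperCoeff_succ, kummerUpperCoeff_succ, negBinomCoeff_succ]
    push_cast
    field_simp
    ring
  have : 0 ≤ negBinomCoeff (-δ) j * ((j - δ) * (α + δ + 1)) / ((j + 1) * (j + 2) * (α + j + 2)) :=
    div_nonneg (mul_nonneg (negBinomCoeff_nonneg (by linarith) j)
      (mul_nonneg (by linarith) (by linarith))) (by positivity)
  linarith

lemma sum_negBinomCoeff_div_le (j M : ℕ) :
    ∑ k ∈ Finset.range M, negBinomCoeff (-δ) (j + 1 + k) / (α + (j + 1 + k : ℕ)) ≤
      kummerUpperCoeff α δ (j + 1) / (α + (j + 1 : ℕ)) := by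
  set g : ℕ → ℝ := fun i => kummerUpperCoeff α δ (j + 1 + i) / (α + (j + 1 + i : ℕ))
  have hstep : ∀ i, negBinomCoeff (-δ) (j + 1 + i) / (α + (j + 1 + i : ℕ)) ≤ g i - g (i + 1) :=
    fun i => by
      have := negBinomCoeff_div_add_le hα hδ₁ hδ₀ (j + i)
      simp only [g, show j + 1 + (i + 1) = j + i + 2 by omega, show j + 1 + i = j + i + 1 by omega]
      linarith
  have hlast : 0 ≤ g M := by
    have := kummerUpperCoeff_succ_nonneg hα hδ₁ hδ₀ (j + M)
    rw [Nat.add_right_comm] at this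
    exact div_nonneg this (by positivity)
  calc _ ≤ ∑ i ∈ Finset.range M, (g i - g (i + 1)) := Finset.sum_le_sum fun i _ => hstep i
    _ = g 0 - g M := Finset.sum_range_sub' g M
    _ ≤ g 0 := by linarith
    _ = _ := by simp [g]

lemma sum_tail_le_kummerUpperCoeff_mul {x : ℝ} (hx : 0 ≤ x) (j M : ℕ) :
    ∑ k ∈ Finset.range M, negBinomCoeff (-δ) (j + 1 + k) * lincGammaScaled (α + (j + 1 + k : ℕ)) x ≤
      kummerUpperCoeff α δ (j + 1) * lincGammaScaled (α + (j + 1 : ℕ)) x := by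
  set ν : ℝ := α + (j + 1 : ℕ)
  have hν : 0 < ν := by positivity
  have hterm : ∀ k : ℕ, negBinomCoeff (-δ) (j + 1 + k) * lincGammaScaled (α + (j + 1 + k : ℕ)) x ≤
      negBinomCoeff (-δ) (j + 1 + k) / (α + (j + 1 + k : ℕ)) * (ν * lincGammaScaled ν x) := by
    intro k
    have hshift : α + ((j + 1 + k : ℕ) : ℝ) = ν + k := by simp only [ν]; push_cast; ring
    rw [hshift, div_mul_eq_mul_div, le_div_iff₀ (by positivity), mul_assoc]
    exact mul_le_mul_of_nonneg_left (by linarith [add_nat_mul_lincGammaScaled_le hx hν k])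
      (negBinomCoeff_nonneg (by linarith) _)
  calc _ ≤ ∑ k ∈ Finset.range M,
        negBinomCoeff (-δ) (j + 1 + k) / (α + (j + 1 + k : ℕ)) * (ν * lincGammaScaled ν x) :=
        Finset.sum_le_sum fun k _ => hterm k
    _ = (∑ k ∈ Finset.range M, negBinomCoeff (-δ) (j + 1 + k) / (α + (j + 1 + k : ℕ))) *
        (ν * lincGammaScaled ν x) := (Finset.sum_mul _ _ _).symm
    _ ≤ kummerUpperCoeff α δ (j + 1) / ν * (ν * lincGammaScaled ν x) :=
        mul_le_mul_of_nonneg_right (sum_negBinomCoeff_div_le hα hδ₁ hδ₀ j M)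
          (mul_nonneg hν.le (lincGammaScaled_nonneg _ _))
    _ = _ := by field_simp

lemma NKummer_le_sum_add_kummerUpperCoeff {x : ℝ} (hx : 0 ≤ x) (j : ℕ) :
    NKummer α δ x ≤
      ∑ k ∈ Finset.range (j + 1), negBinomCoeff (-δ) k * lincGammaScaled (α + k) x +
        kummerUpperCoeff α δ (j + 1) * lincGammaScaled (α + (j + 1 : ℕ)) x := by
  set A := ∑ k ∈ Finset.range (j + 1), negBinomCoeff (-δ) k * lincGammaScaled (α + k) x
  set T := kummerUpperCoeff α δ (j + 1) * lincGammaScaled (α + (j + 1 : ℕ)) x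
  have hrem := ((tendsto_integral_pow_mul (intervalIntegrable_kummer_integrand hα hδ₁ x)).comp
    (tendsto_add_atTop_nat (j + 1))).const_add (A + T)
  rw [add_zero] at hrem
  refine ge_of_tendsto' hrem fun M => ?_
  have h := NKummer_le_sum_add x hα hδ₁ hδ₀ (j + 1 + M)
  have htail := sum_tail_le_kummerUpperCoeff_mul hα hδ₁ hδ₀ hx j M
  rw [Finset.sum_range_add, add_comm (j + 1) M] at h
  simp only [Function.comp_apply, A, T]
  linarith

end UpperCoeff

theorem kummer_gamma_bounds_neg_delta
    (δ : ℝ) (hδ₁ : -1 < δ) (hδ₂ : δ < 0) (α : ℝ) (hα : 0 < α) (n : ℕ) (hn : 1 ≤ n)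
    (x : ℝ) (hx : 0 < x) :
    (∑ k ∈ Finset.range n,
        poch (-δ) k / (k.factorial : ℝ) * (lincGamma (α + k) x / x ^ (α + (k:ℝ)))) +
      poch (-δ) n / (n.factorial : ℝ) * (lincGamma (α + n) x / x ^ (α + (n:ℝ)))
      ≤ NKummer α δ x ∧
    NKummer α δ x ≤
      (∑ k ∈ Finset.range n,
        poch (-δ) k / (k.factorial : ℝ) * (lincGamma (α + k) x / x ^ (α + (k:ℝ)))) +
      (poch (-δ) (n - 1) / ((n - 1).factorial : ℝ) *
          ((α + n) / (δ + 1) - (α + δ + 1) / n)) *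
        (lincGamma (α + n) x / x ^ (α + (n:ℝ))) := by
  obtain ⟨j, rfl⟩ : ∃ j, n = j + 1 := ⟨n - 1, by omega⟩
  have hscaled : ∀ k : ℕ, lincGamma (α + k) x / x ^ (α + (k:ℝ)) = lincGammaScaled (α + k) x :=
    fun k => lincGamma_div_rpow hx _
  simp only [hscaled]
  have hlower := sum_le_NKummer x hα hδ₁ hδ₂.le (j + 2)
  rw [Finset.sum_range_succ] at hlower
  exact ⟨hlower, NKummer_le_sum_add_kummerUpperCoeff hα hδ₁ hδ₂.le hx.le j⟩
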